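/- Let G be a connected chordal graph. The clique tree of G is unique if and only if: (i) every minimal vertex separator S of G has multiplicity ν(S) = 1 (equivalently, the number of minimal vertex separators equals the number of maximal cliques minus one), and (ii) no two distinct minimal vertex separators of G are comparable under inclusion. -/

import Mathlib

namespace Chordal

variable {V : Type*} [Fintype V]

/-- A closed walk has a chord: an edge of `G` joining two support vertices that is
not an edge of the walk. -/
def HasChord (G : SimpleGraph V) {u : V} (c : G.Walk u u) : Prop :=
  ∃ v w, v ∈ c.support ∧ w ∈ c.support ∧ G.Adj v w ∧ s(v, w) ∉ c.edges

/-- A graph is chordal if every cycle of length at least 4 has a chord. -/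
def IsChordal (G : SimpleGraph V) : Prop :=
  ∀ ⦃u : V⦄ (c : G.Walk u u), c.IsCycle → 4 ≤ c.length → HasChord G c

/-- A maximal clique of `G`. -/
def IsMaxClique (G : SimpleGraph V) (s : Set V) : Prop :=
  G.IsClique s ∧ ∀ t : Set V, G.IsClique t → s ⊆ t → s = t

/-- A maximal clique of the induced subgraph `G(W)`. -/
def IsMaxCliqueOn (G : SimpleGraph V) (W s : Set V) : Prop :=
  s ⊆ W ∧ G.IsClique s ∧ ∀ t : Set V, t ⊆ W → G.IsClique t → s ⊆ t → s = t

/-- There is a walk from `u` to `w` staying inside `W` and avoiding `S`. -/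
def ReachWithin (G : SimpleGraph V) (W S : Set V) (u w : V) : Prop :=
  ∃ p : G.Walk u w, ∀ x ∈ p.support, x ∈ W ∧ x ∉ S

/-- `S` separates `u` from `w` in the induced subgraph `G(W)`. -/
def SeparatesOn (G : SimpleGraph V) (W S : Set V) (u w : V) : Prop :=
  u ∈ W ∧ w ∈ W ∧ u ∉ S ∧ w ∉ S ∧ u ≠ w ∧ ¬ ReachWithin G W S u w

/-- `S` is a minimal vertex separator of the induced subgraph `G(W)`:
for some pair `u, w` it is an inclusion-minimal set separating `u` from `w`. -/
def IsMinSeparatorOn (G : SimpleGraph V) (W S : Set V) : Prop :=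
  S ⊆ W ∧ ∃ u w, SeparatesOn G W S u w ∧ ∀ S' ⊂ S, ¬ SeparatesOn G W S' u w

/-- `S` is a minimal vertex separator of `G`. -/
def IsMinSeparator (G : SimpleGraph V) (S : Set V) : Prop :=
  IsMinSeparatorOn G Set.univ S

/-- `S` is inclusion-minimal among the minimal vertex separators of `G`. -/
def IsInclMinSeparator (G : SimpleGraph V) (S : Set V) : Prop :=
  IsMinSeparator G S ∧ ∀ S' : Set V, IsMinSeparator G S' → S' ⊆ S → S' = S

/-- `Γ` is a connected component of `G(V \ S)`. -/
def IsCompOutside (G : SimpleGraph V) (S Γ : Set V) : Prop :=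
  ∃ u, u ∉ S ∧ Γ = {w | ReachWithin G Set.univ S u w}

/-- A vertex is simplicial if its neighborhood is a clique. -/
def IsSimplicial (G : SimpleGraph V) (v : V) : Prop :=
  G.IsClique (G.neighborSet v)

/-- The simplicial component of a clique `C`: the simplicial vertices of `G` in `C`. -/
def Simp (G : SimpleGraph V) (C : Set V) : Set V :=
  {v ∈ C | IsSimplicial G v}

/-- The non-simplicial component of a clique `C`. -/
def Sep (G : SimpleGraph V) (C : Set V) : Set V :=
  C \ Simp G C

/-- `C` is a boundary clique (simply separated clique): a maximal clique such that
`Sep C = C ∩ C'` for some other maximal clique `C'`. -/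
def IsBoundaryClique (G : SimpleGraph V) (C : Set V) : Prop :=
  IsMaxClique G C ∧ ∃ C' : Set V, IsMaxClique G C' ∧ C' ≠ C ∧ Sep G C = C ∩ C'

/-- The induced subgraph on `W`, kept on the same vertex type. -/
def restrictS (G : SimpleGraph V) (W : Set V) : SimpleGraph V where
  Adj u v := G.Adj u v ∧ u ∈ W ∧ v ∈ W
  symm := ⟨fun u v ⟨h, hu, hv⟩ => ⟨h.symm, hv, hu⟩⟩
  loopless := ⟨fun u ⟨h, _, _⟩ => G.ne_of_adj h rfl⟩

/-- The vertex subset `A` induces a connected subgraph of `T`. -/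
def ConnOn {α : Type*} (T : SimpleGraph α) (A : Set α) : Prop :=
  A.Nonempty ∧ ∀ u ∈ A, ∀ v ∈ A, ∃ p : T.Walk u v, ∀ x ∈ p.support, x ∈ A

/-- The induced subgraph `G(W)` is complete. -/
def CompleteOn (G : SimpleGraph V) (W : Set V) : Prop :=
  ∀ u ∈ W, ∀ v ∈ W, u ≠ v → G.Adj u v

/-- A clique tree of `G`: a tree on the maximal cliques of `G` satisfying the
junction property. -/
def IsCliqueTree (G : SimpleGraph V) (T : SimpleGraph {s : Set V // IsMaxClique G s}) : Prop :=
  T.IsTree ∧ ∀ (C₁ C₂ : {s : Set V // IsMaxClique G s}) (p : T.Walk C₁ C₂), p.IsPath →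
    ∀ C₃ ∈ p.support, C₁.val ∩ C₂.val ⊆ C₃.val

/-- A leaf (endpoint) of a graph: a vertex with exactly one neighbor. -/
def IsLeaf {α : Type*} (T : SimpleGraph α) (a : α) : Prop :=
  ∃! b, T.Adj a b

/-- The union of the cliques preceding position `k` in a sequence. -/
def prefUnion {K : ℕ} (f : Fin K → Set V) (k : Fin K) : Set V :=
  {v | ∃ j, j < k ∧ v ∈ f j}

/-- A perfect sequence of the maximal cliques of the induced subgraph `G(W)`:
an enumeration of the maximal cliques of `G(W)` with the running intersection property. -/
def IsPerfectSeqOn (G : SimpleGraph V) (W : Set V) {K : ℕ} (f : Fin K → Set V) : Prop :=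
  Function.Injective f ∧ (∀ s : Set V, IsMaxCliqueOn G W s ↔ ∃ k, f k = s) ∧
  ∀ k : Fin K, 0 < (k : ℕ) →
    G.IsClique (prefUnion f k ∩ f k) ∧ ∃ k' : Fin K, k' < k ∧ prefUnion f k ∩ f k ⊆ f k'

/-- A perfect sequence of the maximal cliques of `G`. -/
def IsPerfectSeq (G : SimpleGraph V) {K : ℕ} (f : Fin K → Set V) : Prop :=
  Function.Injective f ∧ (∀ s : Set V, IsMaxClique G s ↔ ∃ k, f k = s) ∧
  ∀ k : Fin K, 0 < (k : ℕ) →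
    G.IsClique (prefUnion f k ∩ f k) ∧ ∃ k' : Fin K, k' < k ∧ prefUnion f k ∩ f k ⊆ f k'

/-- The closed neighborhood of a vertex. -/
def closedNbhd (G : SimpleGraph V) (v : V) : Set V :=
  insert v (G.neighborSet v)

/-!
Clique trees are built by induction over the induced subgraphs `G(W)`. Minimal separators of a
chordal graph are cliques (two nonadjacent vertices of a minimal separator would close up, through
the two full components, a chordless cycle of length at least four), which gives Dirac's lemma:
`G(W)` has a simplicial vertex `v`. Its closed neighbourhood `N[v]` is the only maximal clique
containing `v`, and a clique tree of `G(W)` arises from one of `G(W \ {v})` either by adding `v`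
to the node `N(v)`, when `N(v)` is a maximal clique there, or by attaching `N[v]` as a leaf to a
node containing `N(v)`.

In any clique tree the edge labels `A ∩ B` are exactly the minimal separators, and a tree on the
`K` maximal cliques has `K - 1` edges; so the separator count says that distinct edges carry
distinct labels. If the label of an edge `AB` lies in the label of another edge `D₁D₂`, then
`D₁, D₂` lie on one side of `AB`, say that of `B`, and replacing `AB` by `AD` with `D ∈ {D₁, D₂}`,
`D ≠ B`, gives a second clique tree. Conversely, if labels are distinct and incomparable, the
labels along the path of one clique tree between the ends of an edge of another all contain,
hence equal, the label of that edge, so the path is that edge.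
-/

open SimpleGraph

section Connectivity

variable {β γ : Type*} {T H : SimpleGraph β} {A B : Set β} {a b c : β}

def JoinedIn (T : SimpleGraph β) (A : Set β) (a b : β) : Prop :=
  ∃ p : T.Walk a b, ∀ c ∈ p.support, c ∈ A

namespace JoinedIn

lemma refl (ha : a ∈ A) : JoinedIn T A a a :=
  ⟨.nil, by simpa⟩

lemma symm (h : JoinedIn T A a b) : JoinedIn T A b a := by
  obtain ⟨p, hp⟩ := h
  exact ⟨p.reverse, by simpa using hp⟩

lemma trans (h : JoinedIn T A a b) (h' : JoinedIn T A b c) : JoinedIn T A a c := by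
  obtain ⟨p, hp⟩ := h
  obtain ⟨q, hq⟩ := h'
  exact ⟨p.append q, fun d hd => (Walk.mem_support_append_iff _ _).mp hd |>.elim (hp d) (hq d)⟩

lemma of_adj (h : T.Adj a b) (ha : a ∈ A) (hb : b ∈ A) : JoinedIn T A a b :=
  ⟨h.toWalk, by simp [ha, hb]⟩

lemma right_mem (h : JoinedIn T A a b) : b ∈ A :=
  h.elim fun p hp => hp b p.end_mem_support

lemma mono (hTH : T ≤ H) (hAB : A ⊆ B) (h : JoinedIn T A a b) : JoinedIn H B a b := by
  obtain ⟨p, hp⟩ := h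
  exact ⟨p.mapLe hTH, by simpa [Walk.support_mapLe_eq_support] using fun c hc => hAB (hp c hc)⟩

lemma map {H : SimpleGraph γ} {B : Set γ} (f : T →g H) (h : JoinedIn T (f ⁻¹' B) a b) :
    JoinedIn H B (f a) (f b) := by
  obtain ⟨p, hp⟩ := h
  exact ⟨p.map f, by simpa [Walk.support_map] using hp⟩

lemma of_walk (p : T.Walk a b) (hp : ∀ c ∈ p.support, c ∈ A)
    (hadj : ∀ c d, T.Adj c d → c ∈ A → d ∈ A → JoinedIn H A c d) : JoinedIn H A a b := by
  induction p with
  | nil => exact refl (hp _ (by simp))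
  | cons h p ih =>
    exact (hadj _ _ h (hp _ (by simp)) (hp _ (by simp))).trans
      (ih fun c hc => hp c (by simp [hc]))

end JoinedIn

end Connectivity

section Trees

variable {β : Type*} {T : SimpleGraph β}

def addLeaf (T : SimpleGraph β) (d : β) : SimpleGraph (Option β) :=
  T.map Function.Embedding.some ⊔ edge none (some d)

lemma addLeaf_adj (T : SimpleGraph β) (d : β) : (addLeaf T d).Adj none (some d) :=
  Or.inr (by simp [edge_adj])

lemma isTree_addLeaf [Finite β] (hT : T.IsTree) (d : β) : (addLeaf T d).IsTree := by
  have hreach : ∀ o, (addLeaf T d).Reachable o (some d) := by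
    rintro (_ | b)
    · exact (addLeaf_adj T d).reachable
    · exact ((hT.1.preconnected b d).map (Embedding.map .some T).toHom).mono le_sup_left
  refine isTree_iff_connected_and_card.mpr ⟨⟨fun a b => (hreach a).trans (hreach b).symm⟩, ?_⟩
  have hnew : s(none, some d) ∉ Function.Embedding.some.sym2Map '' T.edgeSet := by
    rintro ⟨e, -, he⟩
    induction e using Sym2.ind with | _ a b => simp at he
  rw [addLeaf, edgeSet_sup, edgeSet_map, edgeSet_edge_of_ne (by simp), Set.union_singleton,
    Nat.card_coe_set_eq, Set.ncard_insert_of_notMem hnew,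
    Set.ncard_image_of_injective _ Function.Embedding.some.sym2Map.injective, Finite.card_option,
    ← (isTree_iff_connected_and_card.mp hT).2, Nat.card_coe_set_eq]

lemma reachable_deleteEdges_or {a b u v : β} (p : T.Walk u v) (hv : v = a ∨ v = b) :
    (T.deleteEdges {s(a, b)}).Reachable u a ∨ (T.deleteEdges {s(a, b)}).Reachable u b := by
  induction p with
  | nil => rcases hv with rfl | rfl; exacts [.inl .rfl, .inr .rfl]
  | @cons u w _ h _ ih =>
    by_cases he : s(u, w) = s(a, b)
    · rcases Sym2.eq_iff.mp he with ⟨rfl, -⟩ | ⟨rfl, -⟩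
      exacts [.inl .rfl, .inr .rfl]
    · have huw : (T.deleteEdges {s(a, b)}).Reachable u w := Adj.reachable (by simp [h, he])
      exact (ih hv).imp huw.trans huw.trans

lemma not_reachable_deleteEdges (hT : T.IsAcyclic) {a b : β} (hab : T.Adj a b) :
    ¬ (T.deleteEdges {s(a, b)}).Reachable a b :=
  isBridge_iff.mp (isAcyclic_iff_forall_adj_isBridge.mp hT hab)

lemma not_reachable_deleteEdges_of_isPath (hT : T.IsAcyclic) {a b : β}
    {p : T.Walk a b} (hp : p.IsPath) {e : Sym2 β} (he : e ∈ p.edges) :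
    ¬ (T.deleteEdges {e}).Reachable a b := by
  classical
  rintro ⟨q⟩
  have hq : (q.bypass.mapLe (deleteEdges_le _)).IsPath := q.bypass_isPath.mapLe _
  have hpq : p = q.bypass.mapLe _ :=
    congrArg Subtype.val ((hT.subsingleton_path a b).elim ⟨p, hp⟩ ⟨_, hq⟩)
  rw [hpq, Walk.edges_mapLe_eq_edges] at he
  simpa [edgeSet_deleteEdges] using q.bypass.edges_subset_edgeSet he

def exchange (T : SimpleGraph β) (a b d : β) : SimpleGraph β :=
  T.deleteEdges {s(a, b)} ⊔ edge a d

lemma exchange_adj {a b d : β} (had : a ≠ d) : (exchange T a b d).Adj a d :=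
  Or.inr ((edge_adj ..).mpr ⟨.inl ⟨rfl, rfl⟩, had⟩)

lemma isTree_exchange (hT : T.IsTree) {a b d : β} (hab : T.Adj a b)
    (hdb : (T.deleteEdges {s(a, b)}).Reachable d b) : (exchange T a b d).IsTree := by
  have : Nonempty β := ⟨a⟩
  have hbridge : ¬ (T.deleteEdges {s(a, b)}).Reachable a d := fun had =>
    not_reachable_deleteEdges hT.isAcyclic hab (had.trans hdb)
  have had : (exchange T a b d).Adj a d := exchange_adj (by rintro rfl; exact hbridge .rfl)
  have hreach : ∀ c, (exchange T a b d).Reachable c a := fun c => by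
    rcases reachable_deleteEdges_or (b := b) (hT.1.preconnected c a).some (.inl rfl) with h | h
    · exact h.mono le_sup_left
    · exact ((h.trans hdb.symm).mono le_sup_left).trans had.reachable.symm
  exact ⟨⟨fun c e => (hreach c).trans (hreach e).symm⟩,
    (hT.isAcyclic.anti (deleteEdges_le _)).sup_edge_of_not_reachable hbridge⟩

lemma exchange_ne {a b d : β} (hab : T.Adj a b) (hdb : d ≠ b) : exchange T a b d ≠ T := by
  intro h
  have : (exchange T a b d).Adj a b := h.symm ▸ hab
  simp [exchange, edge_adj, hdb.symm, hab.ne, hab.ne'] at this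

end Trees

section JunctionTree

variable {V β γ : Type*} {T H : SimpleGraph β} {g : β → Set V}

/-- `IsCliqueTree` for any labelled tree, with the junction property in subtree form. -/
def IsJunctionTree (T : SimpleGraph β) (g : β → Set V) : Prop :=
  T.IsTree ∧ ∀ ⦃x : V⦄ ⦃a b : β⦄, x ∈ g a → x ∈ g b → JoinedIn T {c | x ∈ g c} a b

lemma IsJunctionTree.inter_subset_of_isPath (hJ : IsJunctionTree T g) {a b c : β}
    {p : T.Walk a b} (hp : p.IsPath) (hc : c ∈ p.support) : g a ∩ g b ⊆ g c := by
  classical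
  rintro x ⟨hxa, hxb⟩
  obtain ⟨q, hq⟩ := hJ.2 hxa hxb
  have : p = q.bypass := congrArg Subtype.val <|
    (hJ.1.isAcyclic.subsingleton_path a b).elim ⟨p, hp⟩ ⟨q.bypass, q.bypass_isPath⟩
  exact hq c (q.support_bypass_subset_support (this ▸ hc))

lemma isCliqueTree_iff_isJunctionTree {G : SimpleGraph V} {T : SimpleGraph {s // IsMaxClique G s}} :
    IsCliqueTree G T ↔ IsJunctionTree T Subtype.val := by
  refine ⟨fun hT => ⟨hT.1, fun x a b hxa hxb => ?_⟩,
    fun hJ => ⟨hJ.1, fun _ _ _ hp _ hc => hJ.inter_subset_of_isPath hp hc⟩⟩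
  obtain ⟨p, hp, -⟩ := hT.1.existsUnique_path a b
  exact ⟨p, fun c hc => hT.2 a b p hp c hc ⟨hxa, hxb⟩⟩

lemma IsJunctionTree.joinedIn_of_reachable (hJ : IsJunctionTree T g) {T' : SimpleGraph β}
    (hle : T' ≤ T) {x : V} {a b : β} (hr : T'.Reachable a b) (hxa : x ∈ g a) (hxb : x ∈ g b) :
    JoinedIn T' {c | x ∈ g c} a b := by
  classical
  obtain ⟨p⟩ := hr
  refine ⟨p.bypass, fun c hc => hJ.inter_subset_of_isPath (p.bypass_isPath.mapLe hle) ?_ ⟨hxa, hxb⟩⟩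
  rwa [Walk.support_mapLe_eq_support]

lemma IsJunctionTree.of_iso (hJ : IsJunctionTree T g) {H : SimpleGraph γ} (e : T ≃g H) :
    IsJunctionTree H (g ∘ e.symm) := by
  refine ⟨e.isTree_iff.mp hJ.1, fun x a b hxa hxb => ?_⟩
  have h : JoinedIn T (e.toHom ⁻¹' {c | x ∈ g (e.symm c)}) (e.symm a) (e.symm b) := by
    convert hJ.2 hxa hxb using 1
    ext c
    simp
  simpa using h.map e.toHom

lemma IsJunctionTree.exists_subtype (hJ : IsJunctionTree T g) (hg : Function.Injective g)
    {P : Set V → Prop} (hP : ∀ s, P s ↔ s ∈ Set.range g) :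
    ∃ T' : SimpleGraph {s // P s}, IsJunctionTree T' Subtype.val := by
  let e : β ≃ {s // P s} := Equiv.ofBijective (fun b => ⟨g b, (hP _).2 ⟨b, rfl⟩⟩)
    ⟨fun a b h => hg (congrArg Subtype.val h),
      fun s => ((hP s).1 s.2).elim fun b hb => ⟨b, Subtype.ext hb⟩⟩
  have hval : g ∘ (Iso.map e T).symm = Subtype.val :=
    funext fun s => congrArg Subtype.val (e.apply_symm_apply s)
  exact ⟨_, hval ▸ hJ.of_iso (Iso.map e T)⟩

lemma IsJunctionTree.addLeaf [Finite β] (hJ : IsJunctionTree T g) (d : β) {L : Set V}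
    (hL : ∀ b, L ∩ g b ⊆ g d) : IsJunctionTree (Chordal.addLeaf T d) (fun o => o.elim L g) := by
  have hsome : ∀ {x a b}, x ∈ g a → x ∈ g b →
      JoinedIn (Chordal.addLeaf T d) {o | x ∈ o.elim L g} (some a) (some b) :=
    fun {x a b} hxa hxb =>
      have h : JoinedIn T ((Embedding.map Function.Embedding.some T).toHom ⁻¹'
        {o | x ∈ o.elim L g}) a b := hJ.2 hxa hxb
      (h.map _).mono le_sup_left le_rfl
  have hleaf : ∀ {x b}, x ∈ L → x ∈ g b →
      JoinedIn (Chordal.addLeaf T d) {o | x ∈ o.elim L g} none (some b) :=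
    fun {x} _ hxL hxb =>
      have hxd := hL _ ⟨hxL, hxb⟩
      (JoinedIn.of_adj (A := {o : Option β | x ∈ o.elim L g}) (addLeaf_adj T d) hxL hxd).trans
        (hsome hxd hxb)
  refine ⟨isTree_addLeaf hJ.1 d, ?_⟩
  rintro x (_ | a) (_ | b) hxa hxb
  · exact .refl hxa
  · exact hleaf hxa hxb
  · exact (hleaf hxb hxa).symm
  · exact hsome hxa hxb

lemma IsJunctionTree.update_insert [DecidableEq β] (hJ : IsJunctionTree T g) (a : β) {v : V}
    (hv : ∀ b, v ∉ g b) : IsJunctionTree T (Function.update g a (insert v (g a))) := by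
  refine ⟨hJ.1, fun x b c hxb hxc => ?_⟩
  by_cases hx : x = v
  · have hnode : ∀ {b}, x ∈ Function.update g a (insert v (g a)) b → b = a := fun h => by
      by_contra hne
      simp [hne, hx, hv] at h
    rw [hnode hxb, hnode hxc]
    exact .refl (by simp [hx])
  · have hmem : ∀ {b}, x ∈ Function.update g a (insert v (g a)) b ↔ x ∈ g b := by
      intro b
      rcases eq_or_ne b a with rfl | hne <;> simp [*]
    exact (hJ.2 (hmem.mp hxb) (hmem.mp hxc)).mono le_rfl fun c hc => hmem.mpr hc

lemma IsJunctionTree.exchange (hJ : IsJunctionTree T g) {a b d : β} (hab : T.Adj a b)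
    (hdb : (T.deleteEdges {s(a, b)}).Reachable d b) (hsub : g a ∩ g b ⊆ g d) :
    IsJunctionTree (Chordal.exchange T a b d) g := by
  have hle : T.deleteEdges {s(a, b)} ≤ Chordal.exchange T a b d := le_sup_left
  have had : a ≠ d := by
    rintro rfl
    exact not_reachable_deleteEdges hJ.1.isAcyclic hab hdb
  have hcut : ∀ {x}, x ∈ g a → x ∈ g b → JoinedIn (Chordal.exchange T a b d) {c | x ∈ g c} a b :=
    fun {x} hxa hxb =>
      have hxd := hsub ⟨hxa, hxb⟩
      (JoinedIn.of_adj (A := {c | x ∈ g c}) (exchange_adj had) hxa hxd).trans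
        ((hJ.joinedIn_of_reachable (deleteEdges_le _) hdb hxd hxb).mono hle le_rfl)
  refine ⟨isTree_exchange hJ.1 hab hdb, fun x c e hxc hxe => ?_⟩
  obtain ⟨p, hp⟩ := hJ.2 hxc hxe
  refine JoinedIn.of_walk p hp fun c e hce hxc hxe => ?_
  by_cases he : s(c, e) = s(a, b)
  · rcases Sym2.eq_iff.mp he with ⟨rfl, rfl⟩ | ⟨rfl, rfl⟩
    exacts [hcut hxc hxe, (hcut hxe hxc).symm]
  · exact JoinedIn.of_adj (hle (by simp [hce, he])) hxc hxe

end JunctionTree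

section Separators

variable {V : Type*} {G : SimpleGraph V} {W S : Set V} {u w x y z : V}

lemma ReachWithin.refl (hx : x ∈ W) (hxS : x ∉ S) : ReachWithin G W S x x :=
  JoinedIn.refl (A := W \ S) ⟨hx, hxS⟩

lemma ReachWithin.symm (h : ReachWithin G W S x y) : ReachWithin G W S y x :=
  JoinedIn.symm (A := W \ S) h

lemma ReachWithin.trans (h : ReachWithin G W S x y) (h' : ReachWithin G W S y z) :
    ReachWithin G W S x z :=
  JoinedIn.trans (A := W \ S) h h'

lemma ReachWithin.of_adj (h : G.Adj x y) (hx : x ∈ W) (hxS : x ∉ S) (hy : y ∈ W) (hyS : y ∉ S) :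
    ReachWithin G W S x y :=
  JoinedIn.of_adj (A := W \ S) h ⟨hx, hxS⟩ ⟨hy, hyS⟩

lemma ReachWithin.right_mem (h : ReachWithin G W S x y) : y ∈ W ∧ y ∉ S :=
  JoinedIn.right_mem (A := W \ S) h

lemma ReachWithin.joinedIn_setOf (h : ReachWithin G W S x y) :
    JoinedIn G {z | ReachWithin G W S x z} x y := by
  classical
  obtain ⟨p, hp⟩ := h
  exact ⟨p, fun z hz => ⟨p.takeUntil z hz,
    fun c hc => hp c (p.support_takeUntil_subset_support hz hc)⟩⟩

lemma SeparatesOn.not_reachWithin (h : SeparatesOn G W S u w) : ¬ ReachWithin G W S u w :=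
  h.2.2.2.2.2

lemma SeparatesOn.symm (h : SeparatesOn G W S u w) : SeparatesOn G W S w u :=
  ⟨h.2.1, h.1, h.2.2.2.1, h.2.2.1, h.2.2.2.2.1.symm, fun hr => h.not_reachWithin hr.symm⟩

lemma exists_adj_reachWithin_of_walk (p : G.Walk u y) (hu : u ∉ S) (hxS : x ∈ S)
    (hp : ∀ z ∈ p.support, z ∈ W ∧ z ∉ S \ {x}) (hxp : x ∈ p.support) :
    ∃ a, G.Adj a x ∧ ReachWithin G W S u a := by
  induction p with
  | nil => exact absurd (by simpa using hxp) (ne_of_mem_of_not_mem hxS hu)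
  | @cons u z _ h q ih =>
    have huW : u ∈ W := (hp u (by simp)).1
    by_cases hzx : z = x
    · exact ⟨u, hzx ▸ h, .refl huW hu⟩
    have hzS : z ∉ S := fun hzS => (hp z (by simp)).2 ⟨hzS, hzx⟩
    obtain ⟨a, hax, hza⟩ := ih hzS (fun c hc => hp c (by simp [hc]))
      ((by simpa using hxp : x = u ∨ _).resolve_left (ne_of_mem_of_not_mem hxS hu))
    exact ⟨a, hax, (ReachWithin.of_adj h huW hu (hp z (by simp)).1 hzS).trans hza⟩

lemma SeparatesOn.exists_adj_reachWithin (hsep : SeparatesOn G W S u w)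
    (hmin : ∀ S' ⊂ S, ¬ SeparatesOn G W S' u w) (hx : x ∈ S) :
    ∃ a, G.Adj a x ∧ ReachWithin G W S u a := by
  obtain ⟨huW, hwW, huS, hwS, huw, hnr⟩ := hsep
  have hreach : ReachWithin G W (S \ {x}) u w := by
    by_contra h
    exact hmin _ (Set.sdiff_singleton_ssubset.mpr hx)
      ⟨huW, hwW, fun h => huS h.1, fun h => hwS h.1, huw, h⟩
  obtain ⟨p, hp⟩ := hreach
  refine exists_adj_reachWithin_of_walk p huS hx hp (by_contra fun hxp => hnr ⟨p, fun z hz => ?_⟩)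
  exact ⟨(hp z hz).1, fun hzS => (hp z hz).2 ⟨hzS, fun h => hxp (h ▸ hz)⟩⟩

lemma exists_minimal_separatesOn [Finite V] (hu : u ∈ W) (hw : w ∈ W) (huw : u ≠ w)
    (hadj : ¬ G.Adj u w) :
    ∃ S ⊆ W, SeparatesOn G W S u w ∧ ∀ S' ⊂ S, ¬ SeparatesOn G W S' u w := by
  have hsep : SeparatesOn G W (W \ {u, w}) u w := by
    refine ⟨hu, hw, by simp, by simp, huw, ?_⟩
    rintro ⟨_ | ⟨h, q⟩, hp⟩
    · exact huw rfl
    · have hz := hp _ (List.mem_cons_of_mem _ q.start_mem_support)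
      simp only [Set.mem_sdiff, Set.mem_insert_iff, Set.mem_singleton_iff, not_and, not_not] at hz
      rcases hz.2 hz.1 with rfl | rfl
      exacts [h.ne rfl, hadj h]
  obtain ⟨S, hS, hmin⟩ := exists_minimal_le_of_wellFoundedLT (SeparatesOn G W · u w) _ hsep
  exact ⟨S, hS.trans Set.sdiff_subset, hmin.prop, fun S' hS' => hmin.not_prop_of_lt hS'⟩

end Separators

section Chordless

variable {V : Type*} {G : SimpleGraph V} {x y a b : V}

def IsChordless (p : G.Walk x y) : Prop :=
  ∀ a ∈ p.support, ∀ b ∈ p.support, G.Adj a b → s(a, b) ∈ p.edges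

lemma two_le_length_of_adj (r : G.Walk a b) (hab : G.Adj a b) (he : s(a, b) ∉ r.edges) :
    2 ≤ r.length := by
  rcases r with _ | ⟨_, _ | ⟨_, _⟩⟩
  · exact absurd rfl hab.ne
  · simp at he
  · simp

lemma exists_shorter_walk_of_adj (p : G.Walk x y) (ha : a ∈ p.support) (hb : b ∈ p.support)
    (hab : G.Adj a b) (he : s(a, b) ∉ p.edges) :
    ∃ q : G.Walk x y, q.length < p.length ∧ ∀ z ∈ q.support, z ∈ p.support := by
  obtain ⟨q, r, rfl⟩ := Walk.mem_support_iff_exists_append.mp ha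
  rcases (Walk.mem_support_append_iff _ _).mp hb with hb | hb
  · obtain ⟨q₁, q₂, rfl⟩ := Walk.mem_support_iff_exists_append.mp hb
    have := two_le_length_of_adj q₂ hab.symm (by rw [Sym2.eq_swap]; simp_all)
    refine ⟨q₁.append (.cons hab.symm r), by simp; omega, fun z hz => ?_⟩
    simp only [Walk.mem_support_append_iff, Walk.support_cons, List.mem_cons] at hz ⊢
    rcases hz with h | rfl | h <;> simp [*]
  · obtain ⟨r₁, r₂, rfl⟩ := Walk.mem_support_iff_exists_append.mp hb
    have := two_le_length_of_adj r₁ hab (by simp_all)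
    refine ⟨q.append (.cons hab r₂), by simp; omega, fun z hz => ?_⟩
    simp only [Walk.mem_support_append_iff, Walk.support_cons, List.mem_cons] at hz ⊢
    rcases hz with h | rfl | h <;> simp [*]

/-- A shortest walk inside a vertex set is a chordless path. -/
lemma JoinedIn.exists_isPath_isChordless {A : Set V} (h : JoinedIn G A x y) :
    ∃ p : G.Walk x y, p.IsPath ∧ IsChordless p ∧ ∀ z ∈ p.support, z ∈ A := by
  classical
  obtain ⟨q, hq, hmin⟩ := (measure fun q : G.Walk x y => q.length).wf.has_min
    {q | ∀ z ∈ q.support, z ∈ A} h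
  refine ⟨q.bypass, q.bypass_isPath, fun a ha b hb hab => by_contra fun he => ?_,
    fun z hz => hq z (q.support_bypass_subset_support hz)⟩
  obtain ⟨q', hlt, hsub⟩ := exists_shorter_walk_of_adj _ ha hb hab he
  exact hmin q' (fun z hz => hq z (q.support_bypass_subset_support (hsub z hz)))
    (hlt.trans_le q.length_bypass_le_length)

lemma start_notMem_tail_support {p : G.Walk x y} (hp : p.IsPath) : x ∉ p.support.tail := by
  have h := hp.support_nodup
  rw [← p.cons_tail_support] at h
  exact (List.nodup_cons.mp h).1

/-- The two paths form a cycle of length at least four; a chord of it must join their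
interiors. -/
lemma IsChordal.exists_adj_of_isChordless (hch : IsChordal G) {p q : G.Walk x y}
    (hp : p.IsPath) (hq : q.IsPath) (hpc : IsChordless p) (hqc : IsChordless q)
    (hp2 : 2 ≤ p.length) (hq2 : 2 ≤ q.length)
    (hpq : ∀ z ∈ p.support, z ∈ q.support → z = x ∨ z = y) :
    ∃ a ∈ p.support, ∃ b ∈ q.support, a ∉ q.support ∧ b ∉ p.support ∧ G.Adj a b := by
  have hcyc : (p.append q.reverse).IsCycle := by
    refine hp.isCycle_append hq.reverse (List.disjoint_left.mpr fun z hzp hzq => ?_) (.inl hp2)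
    have hzq' : z ∈ q.support := by simpa using List.mem_of_mem_tail hzq
    rcases hpq z (List.mem_of_mem_tail hzp) hzq' with rfl | rfl
    exacts [start_notMem_tail_support hp hzp, start_notMem_tail_support hq.reverse hzq]
  obtain ⟨a, b, ha, hb, hab, hne⟩ := hch _ hcyc (by simp; omega)
  simp only [Walk.edges_append, Walk.edges_reverse, List.mem_append, List.mem_reverse,
    not_or] at hne
  have hp' : ¬ (a ∈ p.support ∧ b ∈ p.support) := fun h => hne.1 (hpc a h.1 b h.2 hab)
  have hq' : ¬ (a ∈ q.support ∧ b ∈ q.support) := fun h => hne.2 (hqc a h.1 b h.2 hab)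
  simp only [Walk.mem_support_append_iff, Walk.support_reverse, List.mem_reverse] at ha hb
  rcases ha with ha | ha <;> rcases hb with hb | hb
  · exact absurd ⟨ha, hb⟩ hp'
  · exact ⟨a, ha, b, hb, fun h => hq' ⟨h, hb⟩, fun h => hp' ⟨ha, h⟩, hab⟩
  · exact ⟨b, hb, a, ha, fun h => hq' ⟨ha, h⟩, fun h => hp' ⟨h, hb⟩, hab.symm⟩
  · exact absurd ⟨ha, hb⟩ hq'

end Chordless

section SeparatorClique

variable {V : Type*} {G : SimpleGraph V} {W S : Set V} {u w x y : V}

lemma SeparatesOn.exists_isChordless (hsep : SeparatesOn G W S u w)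
    (hmin : ∀ S' ⊂ S, ¬ SeparatesOn G W S' u w) (hx : x ∈ S) (hy : y ∈ S) (hxy : x ≠ y)
    (hadj : ¬ G.Adj x y) :
    ∃ p : G.Walk x y, p.IsPath ∧ IsChordless p ∧ 2 ≤ p.length ∧
      ∀ z ∈ p.support, z = x ∨ z = y ∨ ReachWithin G W S u z := by
  obtain ⟨a, hax, hua⟩ := hsep.exists_adj_reachWithin hmin hx
  obtain ⟨b, hby, hub⟩ := hsep.exists_adj_reachWithin hmin hy
  have hab : JoinedIn G {z | z = x ∨ z = y ∨ ReachWithin G W S u z} a b :=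
    (hua.joinedIn_setOf.symm.trans hub.joinedIn_setOf).mono le_rfl fun z hz => .inr (.inr hz)
  obtain ⟨p, hp, hpc, hpA⟩ := ((JoinedIn.of_adj hax.symm (.inl rfl) (.inr (.inr hua))).trans
    (hab.trans (JoinedIn.of_adj hby (.inr (.inr hub)) (.inr (.inl rfl))))).exists_isPath_isChordless
  refine ⟨p, hp, hpc, not_lt.mp fun hlt => ?_, hpA⟩
  interval_cases h : p.length
  exacts [hxy (Walk.eq_of_length_eq_zero h), hadj (Walk.adj_of_length_eq_one h)]

theorem IsChordal.isClique_of_isMinSeparatorOn (hch : IsChordal G) (hS : IsMinSeparatorOn G W S) :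
    G.IsClique S := by
  obtain ⟨-, u, w, hsep, hmin⟩ := hS
  intro x hx y hy hxy
  by_contra hadj
  have hcross : ∀ z, ReachWithin G W S u z → ¬ ReachWithin G W S w z :=
    fun z huz hwz => hsep.not_reachWithin (huz.trans hwz.symm)
  obtain ⟨p, hp, hpc, hp2, hpu⟩ := hsep.exists_isChordless hmin hx hy hxy hadj
  obtain ⟨q, hq, hqc, hq2, hqw⟩ := hsep.symm.exists_isChordless
    (fun S' hS' h => hmin S' hS' h.symm) hx hy hxy hadj
  have hpq : ∀ z ∈ p.support, z ∈ q.support → z = x ∨ z = y := fun z hzp hzq => by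
    rcases hpu z hzp with h | h | huz
    · exact .inl h
    · exact .inr h
    rcases hqw z hzq with rfl | rfl | hwz
    exacts [absurd hx huz.right_mem.2, absurd hy huz.right_mem.2, absurd hwz (hcross z huz)]
  obtain ⟨a, hap, b, hbq, haq, hbp, hab⟩ := hch.exists_adj_of_isChordless hp hq hpc hqc hp2 hq2 hpq
  have hua : ReachWithin G W S u a := by
    rcases hpu a hap with rfl | rfl | h
    exacts [absurd q.start_mem_support haq, absurd q.end_mem_support haq, h]
  have hwb : ReachWithin G W S w b := by
    rcases hqw b hbq with rfl | rfl | h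
    exacts [absurd p.start_mem_support hbp, absurd p.end_mem_support hbp, h]
  exact hcross b (hua.trans (.of_adj hab hua.right_mem.1 hua.right_mem.2 hwb.right_mem.1
    hwb.right_mem.2)) hwb

end SeparatorClique

section Simplicial

variable {V : Type*} {G : SimpleGraph V} {W S : Set V} {u w v : V}

def IsSimplicialOn (G : SimpleGraph V) (W : Set V) (v : V) : Prop :=
  G.IsClique (G.neighborSet v ∩ W)

lemma IsSimplicialOn.of_subset {W' : Set V} (h : IsSimplicialOn G W' v)
    (hW : G.neighborSet v ∩ W ⊆ W') : IsSimplicialOn G W v :=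
  IsClique.subset (Set.subset_inter Set.inter_subset_left hW) h

lemma CompleteOn.isSimplicialOn (h : CompleteOn G W) (v : V) : IsSimplicialOn G W v :=
  fun x hx y hy hxy => h x hx.2 y hy.2 hxy

/-- The induction step of Dirac's lemma, applied to `G(W')` for `W'` the component of `u`
together with the clique `S`: a simplicial vertex of `G(W')` outside `S` is simplicial in
`G(W)`. -/
lemma exists_isSimplicialOn_of_separatesOn (hch : IsChordal G) (hSW : S ⊆ W)
    (hsep : SeparatesOn G W S u w) (hmin : ∀ S' ⊂ S, ¬ SeparatesOn G W S' u w)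
    (ih : ∀ W' ⊂ W, CompleteOn G W' ∨ ∃ a ∈ W', ∃ b ∈ W', a ≠ b ∧ ¬ G.Adj a b ∧
      IsSimplicialOn G W' a ∧ IsSimplicialOn G W' b) :
    ∃ a, ReachWithin G W S u a ∧ IsSimplicialOn G W a := by
  obtain ⟨huW, hwW, huS, hwS, huw, hnr⟩ := hsep
  set W' := {z | ReachWithin G W S u z} ∪ S
  have hW' : W' ⊂ W := by
    refine Set.ssubset_iff_of_subset (Set.union_subset (fun z hz => hz.right_mem.1) hSW)
      |>.mpr ⟨w, hwW, ?_⟩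
    rintro (h | h)
    exacts [hnr h, hwS h]
  have hnbr : ∀ {a}, ReachWithin G W S u a → G.neighborSet a ∩ W ⊆ W' := by
    rintro a hua z ⟨hz, hzW⟩
    by_cases hzS : z ∈ S
    · exact .inr hzS
    · exact .inl (hua.trans (.of_adj hz hua.right_mem.1 hua.right_mem.2 hzW hzS))
  have hcomp : ∀ a ∈ W', a ∉ S → IsSimplicialOn G W' a →
      ∃ a, ReachWithin G W S u a ∧ IsSimplicialOn G W a := by
    rintro a (hua | haS) haS' ha
    exacts [⟨a, hua, ha.of_subset (hnbr hua)⟩, absurd haS haS']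
  rcases ih W' hW' with hc | ⟨a, haW, b, hbW, hab, hadj, ha, hb⟩
  · exact hcomp u (.inl (.refl huW huS)) huS (hc.isSimplicialOn u)
  · have hS := hch.isClique_of_isMinSeparatorOn ⟨hSW, u, w, ⟨huW, hwW, huS, hwS, huw, hnr⟩, hmin⟩
    by_cases haS : a ∈ S
    · exact hcomp b hbW (fun hbS => hadj (hS haS hbS hab)) hb
    · exact hcomp a haW haS ha

theorem IsChordal.completeOn_or_exists_isSimplicialOn [Finite V] (hch : IsChordal G)
    (W : Set V) : CompleteOn G W ∨ ∃ a ∈ W, ∃ b ∈ W, a ≠ b ∧ ¬ G.Adj a b ∧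
      IsSimplicialOn G W a ∧ IsSimplicialOn G W b := by
  induction W using WellFoundedLT.induction with
  | _ W ih =>
  by_cases hW : CompleteOn G W
  · exact .inl hW
  simp only [CompleteOn, not_forall] at hW
  obtain ⟨u, hu, w, hw, huw, hadj⟩ := hW
  obtain ⟨S, hSW, hsep, hmin⟩ := exists_minimal_separatesOn hu hw huw hadj
  obtain ⟨a, hua, ha⟩ := exists_isSimplicialOn_of_separatesOn hch hSW hsep hmin ih
  obtain ⟨b, hwb, hb⟩ := exists_isSimplicialOn_of_separatesOn hch hSW hsep.symm
    (fun S' hS' h => hmin S' hS' h.symm) ih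
  have hnr := hsep.not_reachWithin
  refine .inr ⟨a, hua.right_mem.1, b, hwb.right_mem.1, ?_, fun hab => ?_, ha, hb⟩
  · rintro rfl
    exact hnr (hua.trans hwb.symm)
  · exact hnr (hua.trans ((ReachWithin.of_adj hab hua.right_mem.1 hua.right_mem.2
      hwb.right_mem.1 hwb.right_mem.2).trans hwb.symm))

lemma IsChordal.exists_isSimplicialOn [Finite V] (hch : IsChordal G) (hW : W.Nonempty) :
    ∃ v ∈ W, IsSimplicialOn G W v := by
  rcases hch.completeOn_or_exists_isSimplicialOn W with hc | ⟨a, ha, -, -, -, -, hs, -⟩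
  exacts [⟨hW.some, hW.some_mem, hc.isSimplicialOn _⟩, ⟨a, ha, hs⟩]

end Simplicial

section MaxCliques

variable {V : Type*} {G : SimpleGraph V} {W s t : Set V} {v : V}

lemma isMaxCliqueOn_univ : IsMaxCliqueOn G Set.univ s ↔ IsMaxClique G s :=
  ⟨fun h => ⟨h.2.1, fun t ht hst => h.2.2 t (Set.subset_univ t) ht hst⟩,
    fun h => ⟨Set.subset_univ s, h.1, fun t _ ht hst => h.2 t ht hst⟩⟩

lemma exists_isMaxCliqueOn_superset [Finite V] (hsW : s ⊆ W) (hs : G.IsClique s) :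
    ∃ t, IsMaxCliqueOn G W t ∧ s ⊆ t := by
  obtain ⟨t, hst, ht⟩ := Finite.exists_le_maximal (p := fun t => t ⊆ W ∧ G.IsClique t) ⟨hsW, hs⟩
  exact ⟨t, ⟨ht.prop.1, ht.prop.2, fun t' ht'W ht' htt' => ht.eq_of_le ⟨ht'W, ht'⟩ htt'⟩, hst⟩

lemma subset_insert_neighborSet (ht : G.IsClique t) (htW : t ⊆ W) (hv : v ∈ t) :
    t ⊆ insert v (G.neighborSet v ∩ W) := fun z hz => by
  rcases eq_or_ne z v with rfl | hzv
  · exact .inl rfl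
  · exact .inr ⟨ht hv hz hzv.symm, htW hz⟩

lemma neighborSet_inter_subset_sdiff : G.neighborSet v ∩ W ⊆ W \ {v} :=
  fun _ hz => ⟨hz.2, (G.ne_of_adj hz.1).symm⟩

lemma IsSimplicialOn.isMaxCliqueOn_insert (hs : IsSimplicialOn G W v) (hv : v ∈ W) :
    IsMaxCliqueOn G W (insert v (G.neighborSet v ∩ W)) :=
  ⟨Set.insert_subset hv Set.inter_subset_right, isClique_insert.mpr ⟨hs, fun _ hb _ => hb.1⟩,
    fun _ htW ht hCt => hCt.antisymm (subset_insert_neighborSet ht htW (hCt (.inl rfl)))⟩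

lemma IsSimplicialOn.isMaxCliqueOn_iff (hs : IsSimplicialOn G W v) (hv : v ∈ W) :
    IsMaxCliqueOn G W t ↔ t = insert v (G.neighborSet v ∩ W) ∨
      (IsMaxCliqueOn G (W \ {v}) t ∧ t ≠ G.neighborSet v ∩ W) := by
  have hC := hs.isMaxCliqueOn_insert hv
  constructor
  · intro ht
    by_cases hvt : v ∈ t
    · exact .inl (ht.2.2 _ hC.1 hC.2.1 (subset_insert_neighborSet ht.2.1 ht.1 hvt))
    refine .inr ⟨⟨fun z hz => ⟨ht.1 hz, fun h => hvt (h ▸ hz)⟩, ht.2.1,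
      fun t' ht'W ht' htt' => ht.2.2 t' (ht'W.trans Set.sdiff_subset) ht' htt'⟩, ?_⟩
    rintro rfl
    exact hvt ((ht.2.2 _ hC.1 hC.2.1 (Set.subset_insert _ _)) ▸ Set.mem_insert v _)
  · rintro (rfl | ⟨ht, htN⟩)
    · exact hC
    refine ⟨ht.1.trans Set.sdiff_subset, ht.2.1, fun t' ht'W ht' htt' => ?_⟩
    by_cases hvt' : v ∈ t'
    · refine absurd (ht.2.2 _ neighborSet_inter_subset_sdiff hs fun z hz => ?_) htN
      exact (subset_insert_neighborSet ht' ht'W hvt' (htt' hz)).resolve_left (ht.1 hz).2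
    · exact ht.2.2 t' (fun z hz => ⟨ht'W hz, fun h => hvt' (h ▸ hz)⟩) ht' htt'

end MaxCliques

section Existence

variable {V : Type*} {G : SimpleGraph V} {W : Set V} {v : V}

lemma notMem_of_isMaxCliqueOn_sdiff {s : Set V} (hs : IsMaxCliqueOn G (W \ {v}) s) : v ∉ s :=
  fun h => (hs.1 h).2 rfl

lemma IsJunctionTree.exists_of_isMaxCliqueOn_neighborSet
    {T : SimpleGraph {s // IsMaxCliqueOn G (W \ {v}) s}} (hT : IsJunctionTree T Subtype.val)
    (hs : IsSimplicialOn G W v) (hv : v ∈ W)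
    (hN : IsMaxCliqueOn G (W \ {v}) (G.neighborSet v ∩ W)) :
    ∃ T' : SimpleGraph {s // IsMaxCliqueOn G W s}, IsJunctionTree T' Subtype.val := by
  classical
  set a : {s // IsMaxCliqueOn G (W \ {v}) s} := ⟨_, hN⟩
  have hval : ∀ b, b ≠ a → Function.update Subtype.val a (insert v a.val) b = b.val :=
    fun b hb => Function.update_of_ne hb _ _
  refine (hT.update_insert a fun b => notMem_of_isMaxCliqueOn_sdiff b.2).exists_subtype
    (fun b c hbc => ?_) (fun t => ?_)
  · rcases eq_or_ne b a with rfl | hb <;> rcases eq_or_ne c a with rfl | hc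
    · rfl
    · simp only [Function.update_self, hval c hc] at hbc
      exact absurd (hbc ▸ Set.mem_insert v _) (notMem_of_isMaxCliqueOn_sdiff c.2)
    · simp only [Function.update_self, hval b hb] at hbc
      exact absurd (hbc ▸ Set.mem_insert v _) (notMem_of_isMaxCliqueOn_sdiff b.2)
    · exact Subtype.ext (by simpa only [hval b hb, hval c hc] using hbc)
  rw [hs.isMaxCliqueOn_iff hv]
  constructor
  · rintro (rfl | ⟨ht, htN⟩)
    · exact ⟨a, Function.update_self ..⟩
    · exact ⟨⟨t, ht⟩, hval _ fun h => htN (congrArg Subtype.val h)⟩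
  · rintro ⟨b, rfl⟩
    rcases eq_or_ne b a with rfl | hb
    · exact .inl (Function.update_self ..)
    · rw [hval b hb]
      exact .inr ⟨b.2, fun h => hb (Subtype.ext h)⟩

lemma IsJunctionTree.exists_of_not_isMaxCliqueOn_neighborSet [Finite V]
    {T : SimpleGraph {s // IsMaxCliqueOn G (W \ {v}) s}} (hT : IsJunctionTree T Subtype.val)
    (hs : IsSimplicialOn G W v) (hv : v ∈ W)
    (hN : ¬ IsMaxCliqueOn G (W \ {v}) (G.neighborSet v ∩ W)) :
    ∃ T' : SimpleGraph {s // IsMaxCliqueOn G W s}, IsJunctionTree T' Subtype.val := by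
  obtain ⟨D, hD, hND⟩ := exists_isMaxCliqueOn_superset neighborSet_inter_subset_sdiff hs
  have hleaf : ∀ b : {s // IsMaxCliqueOn G (W \ {v}) s},
      insert v (G.neighborSet v ∩ W) ∩ b.val ⊆ D := fun b z ⟨hzC, hzb⟩ =>
    hND (hzC.resolve_left fun h => notMem_of_isMaxCliqueOn_sdiff b.2 (h ▸ hzb))
  refine (hT.addLeaf ⟨D, hD⟩ hleaf).exists_subtype ?_ fun t => ?_
  · rintro (_ | b) (_ | c) hbc
    · rfl
    · have h : insert v (G.neighborSet v ∩ W) = c.val := hbc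
      exact absurd (h ▸ Set.mem_insert v _) (notMem_of_isMaxCliqueOn_sdiff c.2)
    · have h : b.val = insert v (G.neighborSet v ∩ W) := hbc
      exact absurd (h ▸ Set.mem_insert v _) (notMem_of_isMaxCliqueOn_sdiff b.2)
    · exact congrArg some (Subtype.ext hbc)
  rw [hs.isMaxCliqueOn_iff hv]
  constructor
  · rintro (rfl | ⟨ht, -⟩)
    exacts [⟨none, rfl⟩, ⟨some ⟨t, ht⟩, rfl⟩]
  · rintro ⟨_ | b, rfl⟩
    · exact .inl rfl
    · exact .inr ⟨b.2, fun h => hN (h ▸ b.2)⟩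

theorem IsChordal.exists_isJunctionTree_isMaxCliqueOn [Finite V] (hch : IsChordal G) (W : Set V) :
    ∃ T : SimpleGraph {s // IsMaxCliqueOn G W s}, IsJunctionTree T Subtype.val := by
  induction W using WellFoundedLT.induction with
  | _ W ih =>
  rcases W.eq_empty_or_nonempty with rfl | hW
  · have : Subsingleton {s // IsMaxCliqueOn G ∅ s} := ⟨fun a b => Subtype.ext <|
      (Set.subset_empty_iff.mp a.2.1).trans (Set.subset_empty_iff.mp b.2.1).symm⟩
    have : Nonempty {s // IsMaxCliqueOn G ∅ s} :=
      ⟨⟨∅, subset_rfl, isClique_empty, fun t ht _ _ => (Set.subset_empty_iff.mp ht).symm⟩⟩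
    refine ⟨⊥, .of_subsingleton, fun x a b hxa _ => ?_⟩
    obtain rfl := Subsingleton.elim a b
    exact .refl hxa
  obtain ⟨v, hv, hs⟩ := hch.exists_isSimplicialOn hW
  obtain ⟨T, hT⟩ := ih (W \ {v}) (Set.sdiff_singleton_ssubset.mpr hv)
  by_cases hN : IsMaxCliqueOn G (W \ {v}) (G.neighborSet v ∩ W)
  exacts [hT.exists_of_isMaxCliqueOn_neighborSet hs hv hN,
    hT.exists_of_not_isMaxCliqueOn_neighborSet hs hv hN]

theorem IsChordal.exists_isCliqueTree [Finite V] (hch : IsChordal G) :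
    ∃ T, IsCliqueTree G T := by
  obtain ⟨T, hT⟩ := hch.exists_isJunctionTree_isMaxCliqueOn Set.univ
  obtain ⟨T', hT'⟩ := hT.exists_subtype Subtype.val_injective (P := IsMaxClique G)
    fun s => by simp [isMaxCliqueOn_univ]
  exact ⟨T', isCliqueTree_iff_isJunctionTree.mpr hT'⟩

end Existence

section Labels

variable {V : Type*} {G : SimpleGraph V} {T : SimpleGraph {s // IsMaxClique G s}}
  {A B X Y : {s // IsMaxClique G s}} {S : Set V}

lemma IsMaxClique.sdiff_nonempty {C D : Set V} (hC : IsMaxClique G C) (hD : IsMaxClique G D)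
    (hne : C ≠ D) : (C \ D).Nonempty :=
  Set.sdiff_nonempty.mpr fun h => hne (hC.2 D hD.1 h)

lemma exists_isMaxClique_superset [Finite V] {s : Set V} (hs : G.IsClique s) :
    ∃ t, IsMaxClique G t ∧ s ⊆ t := by
  obtain ⟨t, ht, hst⟩ := exists_isMaxCliqueOn_superset (Set.subset_univ s) hs
  exact ⟨t, isMaxCliqueOn_univ.mp ht, hst⟩

lemma IsCliqueTree.reachable_deleteEdges_of_mem (hT : IsCliqueTree G T) {v : V}
    (hv : v ∉ A.val ∩ B.val) (hvX : v ∈ X.val) (hvY : v ∈ Y.val) :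
    (T.deleteEdges {s(A, B)}).Reachable X Y := by
  obtain ⟨p, hp⟩ := (isCliqueTree_iff_isJunctionTree.mp hT).2 hvX hvY
  exact reachable_deleteEdges_iff_exists_walk.mpr ⟨p, fun he =>
    hv ⟨hp A (p.fst_mem_support_of_mem_edges he), hp B (p.snd_mem_support_of_mem_edges he)⟩⟩

lemma IsCliqueTree.reachable_deleteEdges_of_reachWithin [Finite V] (hT : IsCliqueTree G T)
    {u w : V} (h : ReachWithin G Set.univ (A.val ∩ B.val) u w) (huX : u ∈ X.val)
    (hwY : w ∈ Y.val) : (T.deleteEdges {s(A, B)}).Reachable X Y := by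
  obtain ⟨q, hq⟩ := h
  induction q generalizing X with
  | nil => exact hT.reachable_deleteEdges_of_mem (hq _ (by simp)).2 huX hwY
  | @cons u z _ h q ih =>
    obtain ⟨E, hE, huzE⟩ := exists_isMaxClique_superset (isClique_pair.mpr fun _ => h)
    exact (hT.reachable_deleteEdges_of_mem (hq u (by simp)).2 huX (huzE (Set.mem_insert u _))).trans
      (ih (X := ⟨E, hE⟩) (huzE (Set.mem_insert_of_mem u rfl)) hwY
        fun c hc => hq c (by simp [hc]))

theorem IsCliqueTree.isMinSeparator_inter [Finite V] (hT : IsCliqueTree G T) (hAB : T.Adj A B) :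
    IsMinSeparator G (A.val ∩ B.val) := by
  obtain ⟨u, huA, huB⟩ := A.2.sdiff_nonempty B.2 fun h => hAB.ne (Subtype.ext h)
  obtain ⟨w, hwB, hwA⟩ := B.2.sdiff_nonempty A.2 fun h => hAB.ne' (Subtype.ext h)
  refine ⟨Set.subset_univ _, u, w, ⟨trivial, trivial, fun h => huB h.2, fun h => hwA h.1,
    fun h => hwA (h ▸ huA), fun h => ?_⟩, fun S' hS' ⟨_, _, huS', hwS', _, hnr⟩ => ?_⟩
  · exact not_reachable_deleteEdges hT.1.isAcyclic hAB
      (hT.reachable_deleteEdges_of_reachWithin h huA hwB)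
  · obtain ⟨x, hxAB, hxS'⟩ := Set.exists_of_ssubset hS'
    refine hnr ((ReachWithin.of_adj ?_ (Set.mem_univ u) huS' trivial hxS').trans
      (.of_adj ?_ trivial hxS' trivial hwS'))
    exacts [A.2.1 huA hxAB.1 fun h => huB (h ▸ hxAB.2), B.2.1 hxAB.2 hwB fun h => hwA (h ▸ hxAB.1)]

lemma exists_mem_edges_inter_subset_or_reachWithin {D E : {s // IsMaxClique G s}}
    (p : T.Walk D E) {x y : V} (hx : x ∈ D.val) (hxS : x ∉ S) (hy : y ∈ E.val) (hyS : y ∉ S) :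
    (∃ X Y, s(X, Y) ∈ p.edges ∧ X.val ∩ Y.val ⊆ S) ∨ ReachWithin G Set.univ S x y := by
  induction p generalizing x with
  | @nil D =>
    rcases eq_or_ne x y with rfl | hxy
    exacts [.inr (.refl trivial hxS), .inr (.of_adj (D.2.1 hx hy hxy) trivial hxS trivial hyS)]
  | @cons D F _ h q ih =>
    by_cases hsub : D.val ∩ F.val ⊆ S
    · exact .inl ⟨D, F, by simp, hsub⟩
    obtain ⟨z, ⟨hzD, hzF⟩, hzS⟩ := Set.not_subset.mp hsub
    refine (ih hzF hzS hy).imp (fun ⟨X, Y, he, h⟩ => ⟨X, Y, by simp [he], h⟩) fun hzy => ?_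
    rcases eq_or_ne x z with rfl | hxz
    exacts [hzy, (ReachWithin.of_adj (D.2.1 hx hzD hxz) (Set.mem_univ x) hxS trivial hzS).trans hzy]

theorem IsCliqueTree.exists_adj_inter_eq [Finite V] (hT : IsCliqueTree G T)
    (hS : IsMinSeparator G S) : ∃ X Y, T.Adj X Y ∧ X.val ∩ Y.val = S := by
  obtain ⟨-, u, w, ⟨-, -, huS, hwS, huw, hnr⟩, hmin⟩ := hS
  obtain ⟨Cu, hCu, huC⟩ := exists_isMaxClique_superset (G := G) (isClique_singleton u)
  obtain ⟨Cw, hCw, hwC⟩ := exists_isMaxClique_superset (G := G) (isClique_singleton w)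
  obtain ⟨p, hp, -⟩ := hT.1.existsUnique_path ⟨Cu, hCu⟩ ⟨Cw, hCw⟩
  obtain ⟨X, Y, he, hXY⟩ := (exists_mem_edges_inter_subset_or_reachWithin p (huC rfl) huS
    (hwC rfl) hwS).resolve_right hnr
  refine ⟨X, Y, p.adj_of_mem_edges he, by_contra fun hne => hmin _ (hXY.ssubset_of_ne hne)
    ⟨trivial, trivial, fun h => huS (hXY h), fun h => hwS (hXY h), huw, fun h => ?_⟩⟩
  exact not_reachable_deleteEdges_of_isPath hT.1.isAcyclic hp he
    (hT.reachable_deleteEdges_of_reachWithin h (huC rfl) (hwC rfl))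

end Labels

section Uniqueness

variable {V : Type*} {G : SimpleGraph V} {T T' : SimpleGraph {s // IsMaxClique G s}}
  {A B D₁ D₂ X Y : {s // IsMaxClique G s}}

def label (G : SimpleGraph V) : Sym2 {s // IsMaxClique G s} → Set V :=
  Sym2.lift ⟨fun A B => A.val ∩ B.val, fun _ _ => Set.inter_comm _ _⟩

lemma IsCliqueTree.label_image_edgeSet [Finite V] (hT : IsCliqueTree G T) :
    label G '' T.edgeSet = {S | IsMinSeparator G S} := by
  ext S
  constructor
  · rintro ⟨e, he, rfl⟩
    induction e using Sym2.ind with | _ A B => exact hT.isMinSeparator_inter he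
  · intro hS
    obtain ⟨X, Y, hXY, rfl⟩ := hT.exists_adj_inter_eq hS
    exact ⟨s(X, Y), hXY, rfl⟩

lemma IsCliqueTree.ncard_minSeparators_eq_iff [Finite V] (hT : IsCliqueTree G T) :
    {S | IsMinSeparator G S}.ncard = {s | IsMaxClique G s}.ncard - 1 ↔
      Set.InjOn (label G) T.edgeSet := by
  have hcard : T.edgeSet.ncard + 1 = {s | IsMaxClique G s}.ncard :=
    (isTree_iff_connected_and_card.mp hT.1).2
  rw [← hT.label_image_edgeSet, ← Set.ncard_image_iff, ← hcard, Nat.add_sub_cancel]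

lemma IsCliqueTree.exists_ne_of_adj_deleteEdges (hT : IsCliqueTree G T) (hAB : T.Adj A B)
    (hD : (T.deleteEdges {s(A, B)}).Adj D₁ D₂) (hDB : (T.deleteEdges {s(A, B)}).Reachable D₁ B)
    (hsub : A.val ∩ B.val ⊆ D₁.val ∩ D₂.val) : ∃ T', IsCliqueTree G T' ∧ T' ≠ T := by
  have hJ := isCliqueTree_iff_isJunctionTree.mp hT
  have hexch : ∀ D, (T.deleteEdges {s(A, B)}).Reachable D B → D ≠ B → A.val ∩ B.val ⊆ D.val →
      ∃ T', IsCliqueTree G T' ∧ T' ≠ T := fun D hDr hDB hsubD =>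
    ⟨_, isCliqueTree_iff_isJunctionTree.mpr (hJ.exchange hAB hDr hsubD), exchange_ne hAB hDB⟩
  by_cases h : D₁ = B
  · subst h
    exact hexch D₂ hD.symm.reachable hD.ne' (hsub.trans Set.inter_subset_right)
  · exact hexch D₁ hDB h (hsub.trans Set.inter_subset_left)

lemma IsCliqueTree.exists_ne_of_label_subset (hT : IsCliqueTree G T) {e e'} (he : e ∈ T.edgeSet)
    (he' : e' ∈ T.edgeSet) (hne : e ≠ e') (hsub : label G e ⊆ label G e') :
    ∃ T', IsCliqueTree G T' ∧ T' ≠ T := by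
  induction e using Sym2.ind with | _ A B =>
  induction e' using Sym2.ind with | _ D₁ D₂ =>
  have hD : (T.deleteEdges {s(A, B)}).Adj D₁ D₂ :=
    deleteEdges_adj.mpr ⟨he', fun h => hne (Set.mem_singleton_iff.mp h).symm⟩
  rcases reachable_deleteEdges_or (b := B) (hT.1.1.preconnected D₁ A).some (.inl rfl) with h | h
  · rw [Sym2.eq_swap] at h hD
    exact hT.exists_ne_of_adj_deleteEdges (T.adj_symm he) hD h (by rwa [Set.inter_comm])
  · exact hT.exists_ne_of_adj_deleteEdges he hD h hsub

/-- All labels on the `T'`-path between `X` and `Y` contain, hence equal, `X ∩ Y`. -/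
lemma IsCliqueTree.adj_of_injOn_label [Finite V] (hT : IsCliqueTree G T) (hT' : IsCliqueTree G T')
    (hinj : Set.InjOn (label G) T'.edgeSet)
    (hinc : ∀ S S', IsMinSeparator G S → IsMinSeparator G S' → S ⊆ S' → S = S')
    (hXY : T.Adj X Y) : T'.Adj X Y := by
  obtain ⟨p, hp, -⟩ := hT'.1.existsUnique_path X Y
  have hlabel : ∀ e ∈ p.edges, label G e = X.val ∩ Y.val := fun e he => by
    induction e using Sym2.ind with | _ P Q =>
    exact (hinc _ _ (hT.isMinSeparator_inter hXY) (hT'.isMinSeparator_inter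
      (p.adj_of_mem_edges he)) (Set.subset_inter (hT'.2 X Y p hp P
      (p.fst_mem_support_of_mem_edges he)) (hT'.2 X Y p hp Q
      (p.snd_mem_support_of_mem_edges he)))).symm
  have hsame : ∀ e ∈ p.edges, ∀ e' ∈ p.edges, e = e' := fun e he e' he' =>
    hinj (p.edges_subset_edgeSet he) (p.edges_subset_edgeSet he')
      ((hlabel e he).trans (hlabel e' he').symm)
  have hlen : p.length ≤ 1 := by
    rw [← Walk.length_edges]
    rcases hedges : p.edges with _ | ⟨e, _ | ⟨e', l⟩⟩
    · simp
    · simp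
    · have hnd := hp.isTrail.edges_nodup
      rw [hedges, List.nodup_cons, List.mem_cons, not_or] at hnd
      exact absurd (hsame e (by simp [hedges]) e' (by simp [hedges])) hnd.1.1
  have hpos : p.length ≠ 0 := fun h => hXY.ne (Walk.eq_of_length_eq_zero h)
  exact Walk.adj_of_length_eq_one (p := p) (by omega)

end Uniqueness

theorem cliqueTree_unique_iff_general {V : Type*} [Fintype V]
    (G : SimpleGraph V) (hch : IsChordal G) :
    (∀ T T' : SimpleGraph {s : Set V // IsMaxClique G s},
      IsCliqueTree G T → IsCliqueTree G T' → T = T') ↔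
    ({S : Set V | IsMinSeparator G S}.ncard = {s : Set V | IsMaxClique G s}.ncard - 1 ∧
      ∀ S S' : Set V, IsMinSeparator G S → IsMinSeparator G S' → S ≠ S' →
        ¬ S ⊆ S' ∧ ¬ S' ⊆ S) := by
  constructor
  · intro huniq
    obtain ⟨T, hT⟩ := hch.exists_isCliqueTree
    have hlabel : ∀ e ∈ T.edgeSet, ∀ e' ∈ T.edgeSet, label G e ⊆ label G e' → e = e' :=
      fun e he e' he' h => by_contra fun hne =>
        (hT.exists_ne_of_label_subset he he' hne h).elim fun T' hT' => hT'.2 (huniq T' T hT'.1 hT)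
    refine ⟨hT.ncard_minSeparators_eq_iff.mpr fun e he e' he' h => hlabel e he e' he' h.subset,
      fun S S' hS hS' hne => ?_⟩
    obtain ⟨e, he, rfl⟩ : S ∈ label G '' T.edgeSet := by rwa [hT.label_image_edgeSet]
    obtain ⟨e', he', rfl⟩ : S' ∈ label G '' T.edgeSet := by rwa [hT.label_image_edgeSet]
    exact ⟨fun h => hne (congrArg _ (hlabel e he e' he' h)),
      fun h => hne (congrArg _ (hlabel e' he' e he h)).symm⟩
  · rintro ⟨hcount, hinc⟩ T T' hT hT'
    have hinc' : ∀ S S', IsMinSeparator G S → IsMinSeparator G S' → S ⊆ S' → S = S' :=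
      fun S S' hS hS' h => by_contra fun hne => (hinc S S' hS hS' hne).1 h
    ext X Y
    exact ⟨hT.adj_of_injOn_label hT' (hT'.ncard_minSeparators_eq_iff.mp hcount) hinc',
      hT'.adj_of_injOn_label hT (hT.ncard_minSeparators_eq_iff.mp hcount) hinc'⟩

theorem cliqueTree_unique_iff {V : Type*} [Fintype V]
    (G : SimpleGraph V) (hconn : G.Connected) (hch : IsChordal G) :
    (∀ T T' : SimpleGraph {s : Set V // IsMaxClique G s},
      IsCliqueTree G T → IsCliqueTree G T' → T = T') ↔
    ({S : Set V | IsMinSeparator G S}.ncard = {s : Set V | IsMaxClique G s}.ncard - 1 ∧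
      ∀ S S' : Set V, IsMinSeparator G S → IsMinSeparator G S' → S ≠ S' →
        ¬ S ⊆ S' ∧ ¬ S' ⊆ S) :=
  cliqueTree_unique_iff_general G hch

end Chordal
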